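/- The Jucys-Murphy elements $J_m:=\sum_{i=1}^{m-1}K_{im}$ for $m=2,\dots,n+1$, where $K_{ij}(x,p)=(x_ip_j-x_jp_i)^2$, pairwise Poisson-commute: $\{J_m,J_{m'}\}=0$ for all $m,m'$. -/
import Mathlib


open MvPolynomial

/-- The canonical Poisson bracket on polynomial functions on `ℝ^{2m}` with
coordinates `x_a` (variables `Sum.inl a`) and `p_a` (variables `Sum.inr a`). -/
noncomputable def poisson {m : ℕ} (F G : MvPolynomial (Fin m ⊕ Fin m) ℝ) :
    MvPolynomial (Fin m ⊕ Fin m) ℝ :=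
  ∑ a : Fin m,
    (pderiv (Sum.inl a) F * pderiv (Sum.inr a) G -
      pderiv (Sum.inl a) G * pderiv (Sum.inr a) F)

/-- The quadratic function `K_{ij}(x,p) = (x_i p_j - x_j p_i)^2`. -/
noncomputable def Kp {m : ℕ} (i j : Fin m) : MvPolynomial (Fin m ⊕ Fin m) ℝ :=
  (X (Sum.inl i) * X (Sum.inr j) - X (Sum.inl j) * X (Sum.inr i)) ^ 2

/-- The Jucys-Murphy element `J_m = ∑_{i < m} K_{im}`. -/
noncomputable def JM {m : ℕ} (j : Fin m) : MvPolynomial (Fin m ⊕ Fin m) ℝ :=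
  ∑ i ∈ Finset.univ.filter (· < j), Kp i j

/-- Brackets of `K`'s with fully disjoint index sets vanish. -/
lemma poisson_Kp_disjoint {N : ℕ} (i j k l : Fin N)
    (hik : i ≠ k) (hil : i ≠ l) (hjk : j ≠ k) (hjl : j ≠ l) :
    poisson (Kp i j) (Kp k l) = 0 := by
  unfold poisson Kp
  apply Finset.sum_eq_zero
  intro a _
  by_cases h1 : a = i <;> by_cases h2 : a = j <;>
    simp_all [pderiv_X, Pi.single_apply, Ne.symm]

/-- The key cancellation: `{K_{im}, K_{im'}} + {K_{im}, K_{mm'}} = 0`. -/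
lemma poisson_Kp_cancel {N : ℕ} (i m m' : Fin N)
    (him : i ≠ m) (him' : i ≠ m') (hmm' : m ≠ m') :
    poisson (Kp i m) (Kp i m') + poisson (Kp i m) (Kp m m') = 0 := by
  unfold poisson Kp
  rw [← Finset.sum_add_distrib,
    ← Finset.sum_subset (Finset.subset_univ ({i, m, m'} : Finset (Fin N)))]
  · rw [Finset.sum_insert (by simp [him, him']), Finset.sum_insert (by simp [hmm']),
      Finset.sum_singleton]
    simp only [pderiv_X, map_sub, map_mul, map_pow, Derivation.leibniz, Derivation.leibniz_pow,
      Pi.single_apply, if_pos rfl]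
    simp [Pi.single_apply, him, him', hmm', him.symm, him'.symm, hmm'.symm]
    ring
  · intro a _ ha
    simp only [Finset.mem_insert, Finset.mem_singleton, not_or] at ha
    obtain ⟨h1, h2, h3⟩ := ha
    simp [pderiv_X, Pi.single_apply, h1, h2, h3]

lemma poisson_antisymm {N : ℕ} (F G : MvPolynomial (Fin N ⊕ Fin N) ℝ) :
    poisson F G = - poisson G F := by
  unfold poisson
  rw [← Finset.sum_neg_distrib]
  exact Finset.sum_congr rfl fun a _ => by ring

lemma poisson_sum_left {N : ℕ} {ι : Type*} (s : Finset ι)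
    (F : ι → MvPolynomial (Fin N ⊕ Fin N) ℝ) (G : MvPolynomial (Fin N ⊕ Fin N) ℝ) :
    poisson (∑ i ∈ s, F i) G = ∑ i ∈ s, poisson (F i) G := by
  unfold poisson
  rw [Finset.sum_comm]
  refine Finset.sum_congr rfl fun a _ => ?_
  simp [map_sum, Finset.sum_mul, Finset.mul_sum, Finset.sum_sub_distrib]

lemma poisson_sum_right {N : ℕ} {ι : Type*} (s : Finset ι)
    (F : MvPolynomial (Fin N ⊕ Fin N) ℝ) (G : ι → MvPolynomial (Fin N ⊕ Fin N) ℝ) :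
    poisson F (∑ i ∈ s, G i) = ∑ i ∈ s, poisson F (G i) := by
  unfold poisson
  rw [Finset.sum_comm]
  refine Finset.sum_congr rfl fun a _ => ?_
  simp [map_sum, Finset.mul_sum, Finset.sum_mul, Finset.sum_sub_distrib]

lemma poisson_JM_lt {N : ℕ} (m m' : Fin N) (h : m < m') : poisson (JM m) (JM m') = 0 := by
  unfold JM
  rw [poisson_sum_left]
  refine Finset.sum_eq_zero fun i hi => ?_
  rw [Finset.mem_filter] at hi
  have him : i < m := hi.2
  rw [poisson_sum_right]
  have hsub : ({i, m} : Finset (Fin N)) ⊆ Finset.univ.filter (· < m') := by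
    intro x hx
    simp only [Finset.mem_insert, Finset.mem_singleton] at hx
    rcases hx with rfl | rfl <;> simp [lt_trans him h, h]
  rw [← Finset.sum_subset hsub]
  · rw [Finset.sum_pair him.ne]
    exact poisson_Kp_cancel i m m' him.ne (him.trans h).ne h.ne
  · intro i' hi' hni'
    rw [Finset.mem_filter] at hi'
    simp only [Finset.mem_insert, Finset.mem_singleton, not_or] at hni'
    exact poisson_Kp_disjoint i m i' m' (Ne.symm hni'.1) (him.trans h).ne
      (Ne.symm hni'.2) h.ne

theorem stmt15 (n : ℕ) (m m' : Fin (n + 1)) : poisson (JM m) (JM m') = 0 := by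
  rcases lt_trichotomy m m' with h | rfl | h
  · exact poisson_JM_lt m m' h
  · have h := poisson_antisymm (JM m) (JM m)
    have h2 : poisson (JM m) (JM m) + poisson (JM m) (JM m) = 0 := by
      nth_rewrite 1 [h]; ring
    exact add_self_eq_zero.mp h2
  · rw [poisson_antisymm, poisson_JM_lt m' m h, neg_zero]
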